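/- Let Q be a 3-uniform hypergraph on n vertices that contains no copy of K_{H,t}, where H is the 2-uniform graph consisting of two disjoint edges and K_{H,t} is the 3-uniform hypergraph obtained from H by adding t new vertices v_1, ..., v_t and replacing each edge e of H by the t triples e ∪ {v_i}. Then Q has O(n^(3 - 1/t)) edges. -/

import Mathlib

open Finset

/-! The link of a pair `e` is the set of vertices `v` with `e ∪ {v} ∈ E`. Every edge lies in the
links of three pairs, so the link sizes sum to `3 |E|`. For a `t`-set `T`, the pairs whose link
contains `T` form an intersecting family of pairs (two disjoint ones would span a copy of
`K_{H,t}` with apex set `T`), hence there are at most `2n` of them. Double counting therefore gives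
`∑ₑ C(|link e|, t) ≤ C(n, t) · 2n`, and the power-mean inequality turns this into
`∑ₑ |link e| = O(n^{3 - 1/t})`. -/

lemma sum_choose_card_eq_sum_card_filter_subset {ι α : Type*} [Fintype α] [DecidableEq α]
    (s : Finset ι) (L : ι → Finset α) (t : ℕ) :
    ∑ i ∈ s, (#(L i)).choose t = ∑ T ∈ univ.powersetCard t, #{i ∈ s | T ⊆ L i} := by
  simp_rw [← card_powersetCard]
  convert sum_card_bipartiteAbove_eq_sum_card_bipartiteBelow (s := s) (t := univ.powersetCard t)
    (fun i T => T ⊆ L i) using 3 with i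
  · ext T
    simp [bipartiteAbove, and_comm]
  · rfl

section Hypergraph

variable {V : Type*} [DecidableEq V]

def HasMatchingExpansion (E : Finset (Finset V)) (t : ℕ) : Prop :=
  ∃ (e₁ e₂ T : Finset V), e₁.card = 2 ∧ e₂.card = 2 ∧ Disjoint e₁ e₂ ∧
    T.card = t ∧ Disjoint T (e₁ ∪ e₂) ∧ ∀ v ∈ T, e₁ ∪ {v} ∈ E ∧ e₂ ∪ {v} ∈ E

lemma exists_eq_pair_of_mem {e : Finset V} {a : V} (ha : a ∈ e) (he : e.card = 2) :
    ∃ x, e = {a, x} := by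
  obtain ⟨x, hx⟩ := card_eq_one.mp (by rw [card_erase_of_mem ha, he] : #(e.erase a) = 1)
  exact ⟨x, by rw [← insert_erase ha, hx]⟩

variable {E : Finset (Finset V)}

lemma not_mem_of_union_singleton_mem (hE : ∀ f ∈ E, f.card = 3) {e : Finset V} {v : V}
    (he : e.card = 2) (hv : e ∪ {v} ∈ E) : v ∉ e := by
  intro hve
  have := hE _ hv
  rw [union_singleton, insert_eq_of_mem hve] at this
  omega

variable [Fintype V]

def link (E : Finset (Finset V)) (e : Finset V) : Finset V :=
  {v | e ∪ {v} ∈ E}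

lemma card_filter_union_singleton_mem (hE : ∀ f ∈ E, f.card = 3) (v : V) :
    #{e ∈ univ.powersetCard 2 | e ∪ {v} ∈ E} = #{f ∈ E | v ∈ f} := by
  refine card_nbij' (insert v) (erase · v) ?_ ?_ ?_ ?_
  · intro e he
    simp only [coe_filter, mem_powersetCard, Set.mem_ofPred_eq, union_singleton] at he ⊢
    exact ⟨he.2, mem_insert_self v e⟩
  · intro f hf
    simp only [coe_filter, mem_powersetCard, Set.mem_ofPred_eq] at hf ⊢
    rw [card_erase_of_mem hf.2, hE f hf.1, union_singleton, insert_erase hf.2]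
    exact ⟨⟨subset_univ _, rfl⟩, hf.1⟩
  · intro e he
    simp only [coe_filter, mem_powersetCard, Set.mem_ofPred_eq] at he
    exact erase_insert (not_mem_of_union_singleton_mem hE he.1.2 he.2)
  · intro f hf
    simp only [coe_filter, Set.mem_ofPred_eq] at hf
    exact insert_erase hf.2

lemma sum_card_link (hE : ∀ f ∈ E, f.card = 3) :
    ∑ e ∈ univ.powersetCard 2, #(link E e) = 3 * #E :=
  calc ∑ e ∈ univ.powersetCard 2, #(link E e)
      = ∑ v, #{e ∈ univ.powersetCard 2 | e ∪ {v} ∈ E} :=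
        sum_card_bipartiteAbove_eq_sum_card_bipartiteBelow _
    _ = ∑ v, #{f ∈ E | v ∈ f} := sum_congr rfl fun v _ => card_filter_union_singleton_mem hE v
    _ = ∑ f ∈ E, #{v | v ∈ f} := sum_card_bipartiteAbove_eq_sum_card_bipartiteBelow _
    _ = ∑ f ∈ E, #f := by simp only [filter_mem_eq_inter, univ_inter]
    _ = 3 * #E := by rw [sum_congr rfl hE, sum_const, smul_eq_mul, mul_comm]

lemma card_le_card_mul_of_forall_not_disjoint {G : Finset (Finset V)} {S : Finset V}
    (hG : ∀ e ∈ G, e.card = 2) (hS : ∀ e ∈ G, ¬Disjoint S e) :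
    #G ≤ #S * Fintype.card V := by
  have hsub : G ⊆ S.biUnion fun a => univ.image fun x => {a, x} := by
    intro e he
    obtain ⟨a, haS, hae⟩ := not_disjoint_iff.mp (hS e he)
    obtain ⟨x, rfl⟩ := exists_eq_pair_of_mem hae (hG e he)
    exact mem_biUnion.mpr ⟨a, haS, mem_image_of_mem _ (mem_univ x)⟩
  exact (card_le_card hsub).trans
    (card_biUnion_le_card_mul _ _ _ fun a _ => card_image_le.trans_eq card_univ)

lemma card_le_two_mul_of_intersecting {G : Finset (Finset V)} (hG : ∀ e ∈ G, e.card = 2)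
    (hI : (G : Set (Finset V)).Intersecting) : #G ≤ 2 * Fintype.card V := by
  obtain rfl | ⟨e₀, he₀⟩ := G.eq_empty_or_nonempty
  · simp
  rw [← hG e₀ he₀]
  exact card_le_card_mul_of_forall_not_disjoint hG fun e he => hI he₀ he

lemma intersecting_filter_subset_link (hE : ∀ f ∈ E, f.card = 3) {t : ℕ}
    (hfree : ¬HasMatchingExpansion E t) {T : Finset V} (hT : T.card = t) :
    Set.Intersecting
      (({e ∈ univ.powersetCard 2 | T ⊆ link E e} : Finset (Finset V)) : Set (Finset V)) := by
  intro e₁ he₁ e₂ he₂ hdisj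
  simp only [coe_filter, mem_powersetCard, Set.mem_ofPred_eq, link, subset_iff, mem_filter,
    mem_univ, true_and] at he₁ he₂
  refine hfree ⟨e₁, e₂, T, he₁.1.2, he₂.1.2, hdisj, hT, ?_, fun v hv => ⟨he₁.2 hv, he₂.2 hv⟩⟩
  refine disjoint_left.mpr fun v hv hve => ?_
  rcases mem_union.mp hve with h | h
  · exact not_mem_of_union_singleton_mem hE he₁.1.2 (he₁.2 hv) h
  · exact not_mem_of_union_singleton_mem hE he₂.1.2 (he₂.2 hv) h

lemma sum_choose_card_link_le (hE : ∀ f ∈ E, f.card = 3) {t : ℕ}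
    (hfree : ¬HasMatchingExpansion E t) :
    ∑ e ∈ univ.powersetCard 2, (#(link E e)).choose t ≤ 2 * Fintype.card V ^ (t + 1) := by
  rw [sum_choose_card_eq_sum_card_filter_subset]
  calc ∑ T ∈ univ.powersetCard t, #{e ∈ univ.powersetCard 2 | T ⊆ link E e}
      ≤ ∑ T ∈ (univ : Finset V).powersetCard t, 2 * Fintype.card V := by
        refine sum_le_sum fun T hT => card_le_two_mul_of_intersecting (fun e he => ?_)
          (intersecting_filter_subset_link hE hfree (mem_powersetCard.mp hT).2)
        exact (mem_powersetCard.mp (mem_filter.mp he).1).2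
    _ = (Fintype.card V).choose t * (2 * Fintype.card V) := by
        rw [sum_const, card_powersetCard, card_univ, smul_eq_mul]
    _ ≤ Fintype.card V ^ t * (2 * Fintype.card V) := by gcongr; exact Nat.choose_le_pow _ _
    _ = 2 * Fintype.card V ^ (t + 1) := by ring

end Hypergraph

lemma sub_pow_le_pow_mul_choose (d t : ℕ) : (d - t) ^ t ≤ t ^ t * d.choose t :=
  calc (d - t) ^ t ≤ (d + 1 - t) ^ t := by gcongr; omega
    _ ≤ d.descFactorial t := Nat.pow_sub_le_descFactorial d t
    _ = t.factorial * d.choose t := Nat.descFactorial_eq_factorial_mul_choose d t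
    _ ≤ t ^ t * d.choose t := by gcongr; exact Nat.factorial_le_pow t

lemma pow_sum_sub_le {ι : Type*} (s : Finset ι) (d : ι → ℕ) {t n : ℕ} (ht : t ≠ 0)
    (hs : #s ≤ n ^ 2) (h : ∑ i ∈ s, (d i).choose t ≤ 2 * n ^ (t + 1)) :
    (∑ i ∈ s, (d i - t)) ^ t ≤ 2 * t ^ t * n ^ (3 * t - 1) := by
  obtain ⟨k, rfl⟩ := Nat.exists_eq_add_one_of_ne_zero ht
  calc (∑ i ∈ s, (d i - (k + 1))) ^ (k + 1)
      ≤ #s ^ k * ∑ i ∈ s, (d i - (k + 1)) ^ (k + 1) :=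
        pow_sum_le_card_mul_sum_pow (fun _ _ => Nat.zero_le _) k
    _ ≤ (n ^ 2) ^ k * ((k + 1) ^ (k + 1) * (2 * n ^ (k + 1 + 1))) := by
        gcongr
        calc ∑ i ∈ s, (d i - (k + 1)) ^ (k + 1)
            ≤ ∑ i ∈ s, (k + 1) ^ (k + 1) * (d i).choose (k + 1) :=
              sum_le_sum fun i _ => sub_pow_le_pow_mul_choose _ _
          _ ≤ (k + 1) ^ (k + 1) * (2 * n ^ (k + 1 + 1)) := by rw [← mul_sum]; gcongr
    _ = 2 * (k + 1) ^ (k + 1) * n ^ (3 * (k + 1) - 1) := by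
        rw [show 3 * (k + 1) - 1 = 2 * k + (k + 2) by omega, ← pow_mul]; ring

lemma rpow_three_sub_inv_pow {x : ℝ} (hx : 0 ≤ x) {t : ℕ} (ht : t ≠ 0) :
    (x ^ (3 - 1 / (t : ℝ))) ^ t = x ^ (3 * t - 1) := by
  rw [← Real.rpow_natCast, ← Real.rpow_mul hx, ← Real.rpow_natCast,
    Nat.cast_sub (by omega), Nat.cast_mul]
  congr 1
  field_simp
  push_cast
  ring

lemma sq_le_rpow_three_sub_inv (n : ℕ) {t : ℕ} (ht : t ≠ 0) :
    (n : ℝ) ^ 2 ≤ (n : ℝ) ^ (3 - 1 / (t : ℝ)) := by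
  rcases Nat.eq_zero_or_pos n with rfl | hn
  · simpa using Real.rpow_nonneg le_rfl _
  have hinv : 1 / (t : ℝ) ≤ 1 := by
    rw [div_le_one (by positivity)]; exact_mod_cast Nat.one_le_iff_ne_zero.mpr ht
  rw [← Real.rpow_natCast]
  exact Real.rpow_le_rpow_of_exponent_le (by exact_mod_cast hn) (by push_cast; linarith)

lemma sum_le_of_sum_choose_le {ι : Type*} (s : Finset ι) (d : ι → ℕ) {t n : ℕ} (ht : t ≠ 0)
    (hs : #s ≤ n ^ 2) (h : ∑ i ∈ s, (d i).choose t ≤ 2 * n ^ (t + 1)) :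
    ((∑ i ∈ s, d i : ℕ) : ℝ) ≤ 3 * t * (n : ℝ) ^ (3 - 1 / (t : ℝ)) := by
  set B := (n : ℝ) ^ (3 - 1 / (t : ℝ))
  set x := ∑ i ∈ s, (d i - t)
  have hx : (x : ℝ) ≤ 2 * t * B := by
    refine le_of_pow_le_pow_left₀ ht (by positivity) ?_
    calc (x : ℝ) ^ t ≤ 2 * t ^ t * n ^ (3 * t - 1) := by exact_mod_cast pow_sum_sub_le s d ht hs h
      _ ≤ 2 ^ t * t ^ t * n ^ (3 * t - 1) := by
          gcongr; exact le_self_pow₀ one_le_two ht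
      _ = (2 * t * B) ^ t := by rw [mul_pow, mul_pow, rpow_three_sub_inv_pow n.cast_nonneg ht]
  have hd : ∑ i ∈ s, d i ≤ x + t * #s := by
    rw [mul_comm, ← smul_eq_mul, ← sum_const, ← sum_add_distrib]
    exact sum_le_sum fun i _ => by omega
  have hsB : (#s : ℝ) ≤ B := (by exact_mod_cast hs : (#s : ℝ) ≤ n ^ 2).trans
    (sq_le_rpow_three_sub_inv n ht)
  calc ((∑ i ∈ s, d i : ℕ) : ℝ) ≤ x + t * #s := by exact_mod_cast hd
    _ ≤ 2 * t * B + t * B := by gcongr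
    _ = 3 * t * B := by ring

theorem matching_expansion_turan (t : ℕ) (ht : 2 ≤ t) :
    ∃ c : ℝ, ∀ (V : Type) [Fintype V] [DecidableEq V]
      (E : Finset (Finset V)), (∀ e ∈ E, e.card = 3) →
      (¬ ∃ (e₁ e₂ T : Finset V), e₁.card = 2 ∧ e₂.card = 2 ∧ Disjoint e₁ e₂ ∧
        T.card = t ∧ Disjoint T (e₁ ∪ e₂) ∧
        ∀ v ∈ T, e₁ ∪ {v} ∈ E ∧ e₂ ∪ {v} ∈ E) →
      (E.card : ℝ) ≤ c * (Fintype.card V : ℝ) ^ (3 - 1 / (t : ℝ)) := by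
  refine ⟨t, fun V _ _ E hE hfree => ?_⟩
  have hpairs : #((univ : Finset V).powersetCard 2) ≤ Fintype.card V ^ 2 := by
    rw [card_powersetCard, card_univ]; exact Nat.choose_le_pow _ _
  have key := sum_le_of_sum_choose_le _ (fun e => #(link E e)) (by omega) hpairs
    (sum_choose_card_link_le hE hfree)
  rw [sum_card_link hE] at key
  push_cast at key
  linarith
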